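/- arXiv:1706.06032 — 3 statements merged into one kernel-verified Lean document; each statement's English description precedes it below -/
import Mathlib

section
/- For n ≥ 1 and every fixed ρ ∈ ℝ, the function z ↦ J_{m,n}(z,ρ) is real-differentiable on ℂ and its conjugate Wirtinger derivative satisfies ∂/∂z̄ J_{m,n}(z,ρ) = n · J_{m,n−1}(z,ρ) for all z ∈ ℂ. -/
open MeasureTheory ProbabilityTheory Complex Finset

/-- Itô's complex Hermite polynomial `J_{m,n}(z, ρ)`. -/
noncomputable def complexHermite (m n : ℕ) (z : ℂ) (ρ : ℝ) : ℂ :=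
  ∑ k ∈ Finset.range (min m n + 1),
    (-1 : ℂ) ^ k * (Nat.factorial k : ℂ) * (Nat.choose m k : ℂ) * (Nat.choose n k : ℂ) *
      (ρ : ℂ) ^ k * z ^ (m - k) * (starRingEnd ℂ z) ^ (n - k)

/-- Wirtinger derivative `∂f/∂z = (1/2)(∂f/∂x − i ∂f/∂y)`. -/
noncomputable def wirtingerDeriv (f : ℂ → ℂ) (z : ℂ) : ℂ :=
  (fderiv ℝ f z 1 - Complex.I * fderiv ℝ f z Complex.I) / 2

/-- Conjugate Wirtinger derivative `∂f/∂z̄ = (1/2)(∂f/∂x + i ∂f/∂y)`. -/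
noncomputable def wirtingerDerivBar (f : ℂ → ℂ) (z : ℂ) : ℂ :=
  (fderiv ℝ f z 1 + Complex.I * fderiv ℝ f z Complex.I) / 2

/-! `∂/∂z̄` obeys the Leibniz rule, kills holomorphic functions and sends `g ∘ conj` to
`g' ∘ conj`, so `∂/∂z̄ (z^a z̄^b) = b z^a z̄^(b-1)`. Differentiating `J_{m,n}` termwise and using
`C(n,k) (n - k) = n C(n-1,k)` gives `n J_{m,n-1}`; the term `k = n` that `J_{m,n-1}` lacks carries
the factor `n - k = 0`. -/

open scoped ComplexConjugate

def HasWirtingerDerivBarAt (f : ℂ → ℂ) (c z : ℂ) : Prop :=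
  ∃ L : ℂ →L[ℝ] ℂ, HasFDerivAt f L z ∧ (L 1 + I * L I) / 2 = c

namespace HasWirtingerDerivBarAt

variable {f g : ℂ → ℂ} {c d z : ℂ}

theorem differentiableAt (h : HasWirtingerDerivBarAt f c z) : DifferentiableAt ℝ f z :=
  let ⟨_, hL, _⟩ := h; hL.differentiableAt

theorem wirtingerDerivBar_eq (h : HasWirtingerDerivBarAt f c z) : wirtingerDerivBar f z = c := by
  obtain ⟨L, hL, rfl⟩ := h
  rw [wirtingerDerivBar, hL.fderiv]

theorem const_mul (a : ℂ) (h : HasWirtingerDerivBarAt f c z) :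
    HasWirtingerDerivBarAt (fun w => a * f w) (a * c) z := by
  obtain ⟨L, hL, rfl⟩ := h
  refine ⟨a • L, hL.const_mul a, ?_⟩
  simp only [smul_apply, smul_eq_mul]
  ring

theorem mul (hf : HasWirtingerDerivBarAt f c z) (hg : HasWirtingerDerivBarAt g d z) :
    HasWirtingerDerivBarAt (fun w => f w * g w) (f z * d + g z * c) z := by
  obtain ⟨L, hL, rfl⟩ := hf
  obtain ⟨M, hM, rfl⟩ := hg
  refine ⟨f z • M + g z • L, hL.mul hM, ?_⟩
  simp only [add_apply, smul_apply, smul_eq_mul]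
  ring

theorem sum {ι : Type*} {s : Finset ι} {F : ι → ℂ → ℂ} {C : ι → ℂ}
    (h : ∀ i ∈ s, HasWirtingerDerivBarAt (F i) (C i) z) :
    HasWirtingerDerivBarAt (fun w => ∑ i ∈ s, F i w) (∑ i ∈ s, C i) z := by
  choose! L hL hC using h
  refine ⟨∑ i ∈ s, L i, HasFDerivAt.fun_sum hL, ?_⟩
  simp only [_root_.sum_apply, mul_sum, ← sum_add_distrib, sum_div]
  exact sum_congr rfl hC

end HasWirtingerDerivBarAt

theorem DifferentiableAt.hasWirtingerDerivBarAt_zero {f : ℂ → ℂ} {z : ℂ}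
    (h : DifferentiableAt ℂ f z) : HasWirtingerDerivBarAt f 0 z := by
  refine ⟨_, h.hasFDerivAt.restrictScalars ℝ, ?_⟩
  simp only [ContinuousLinearMap.coe_restrictScalars', fderiv_eq_smul_deriv, smul_eq_mul, one_mul]
  linear_combination deriv f z / 2 * I_mul_I

theorem HasDerivAt.hasWirtingerDerivBarAt_comp_conj {g : ℂ → ℂ} {g' z : ℂ}
    (h : HasDerivAt g g' (conj z)) : HasWirtingerDerivBarAt (fun w => g (conj w)) g' z := by
  refine ⟨_, (h.hasFDerivAt.restrictScalars ℝ).comp z conjCLE.hasFDerivAt, ?_⟩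
  simp only [ContinuousLinearMap.comp_apply, ContinuousLinearMap.coe_restrictScalars',
    ContinuousLinearMap.toSpanSingleton_apply, ContinuousLinearEquiv.coe_coe, conjCLE_apply,
    map_one, conj_I, smul_eq_mul, one_mul]
  linear_combination -g' / 2 * I_mul_I

theorem hasWirtingerDerivBarAt_pow_mul_conj_pow (a b : ℕ) (z : ℂ) :
    HasWirtingerDerivBarAt (fun w => w ^ a * conj w ^ b)
      (b * z ^ a * conj z ^ (b - 1)) z := by
  have hpow := (differentiableAt_pow (𝕜 := ℂ) a (x := z)).hasWirtingerDerivBarAt_zero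
  have hconj := (hasDerivAt_pow b (conj z)).hasWirtingerDerivBarAt_comp_conj
  convert hpow.mul hconj using 1
  ring

theorem Nat.choose_mul_sub (n k : ℕ) : n.choose k * (n - k) = n * (n - 1).choose k := by
  cases n with
  | zero => simp
  | succ n => rw [Nat.add_sub_cancel, mul_comm _ (n.choose k), Nat.choose_mul_succ_eq]

theorem complexHermite_eq_sum_range {m n N : ℕ} (hN : min m n < N) (z : ℂ) (ρ : ℝ) :
    complexHermite m n z ρ = ∑ k ∈ range N,
      (-1 : ℂ) ^ k * (Nat.factorial k : ℂ) * (Nat.choose m k : ℂ) * (Nat.choose n k : ℂ) *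
        (ρ : ℂ) ^ k * z ^ (m - k) * (starRingEnd ℂ z) ^ (n - k) := by
  refine sum_subset (range_subset_range.2 hN) fun k _ hk => ?_
  have hk : m < k ∨ n < k := by rw [mem_range] at hk; omega
  rcases hk with hk | hk <;> simp [Nat.choose_eq_zero_of_lt hk]

theorem hasWirtingerDerivBarAt_complexHermite (m n : ℕ) (z : ℂ) (ρ : ℝ) :
    HasWirtingerDerivBarAt (fun w => complexHermite m n w ρ)
      (n * complexHermite m (n - 1) z ρ) z := by
  have h := HasWirtingerDerivBarAt.sum (s := range (min m n + 1)) fun k _ =>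
    (hasWirtingerDerivBarAt_pow_mul_conj_pow (m - k) (n - k) z).const_mul
      ((-1 : ℂ) ^ k * (Nat.factorial k : ℂ) * (Nat.choose m k : ℂ) * (Nat.choose n k : ℂ) *
        (ρ : ℂ) ^ k)
  convert h using 1
  · funext w
    simp only [complexHermite, mul_assoc]
  · rw [complexHermite_eq_sum_range (by omega : min m (n - 1) < min m n + 1), mul_sum]
    refine sum_congr rfl fun k _ => ?_
    have hc : (n.choose k : ℂ) * ((n - k : ℕ) : ℂ) = n * ((n - 1).choose k : ℂ) := by
      exact_mod_cast Nat.choose_mul_sub n k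
    rw [Nat.sub_right_comm n 1 k]
    linear_combination (-((-1 : ℂ) ^ k * (Nat.factorial k : ℂ) * (Nat.choose m k : ℂ) *
      (ρ : ℂ) ^ k * z ^ (m - k) * conj z ^ (n - k - 1))) * hc

theorem wirtingerDerivBar_complexHermite_general (m n : ℕ) (ρ : ℝ) :
    (∀ z : ℂ, DifferentiableAt ℝ (fun w => complexHermite m n w ρ) z) ∧
    (∀ z : ℂ, wirtingerDerivBar (fun w => complexHermite m n w ρ) z
      = (n : ℂ) * complexHermite m (n - 1) z ρ) :=
  ⟨fun z => (hasWirtingerDerivBarAt_complexHermite m n z ρ).differentiableAt,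
    fun z => (hasWirtingerDerivBarAt_complexHermite m n z ρ).wirtingerDerivBar_eq⟩

/-- For `n ≥ 1` and fixed `ρ`, `z ↦ J_{m,n}(z,ρ)` is real-differentiable on `ℂ` and
`∂/∂z̄ J_{m,n}(z,ρ) = n · J_{m,n-1}(z,ρ)`. -/
theorem wirtingerDerivBar_complexHermite (m n : ℕ) (hn : 1 ≤ n) (ρ : ℝ) :
    (∀ z : ℂ, DifferentiableAt ℝ (fun w => complexHermite m n w ρ) z) ∧
    (∀ z : ℂ, wirtingerDerivBar (fun w => complexHermite m n w ρ) z
      = (n : ℂ) * complexHermite m (n - 1) z ρ) :=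
  wirtingerDerivBar_complexHermite_general m n ρ
end

section
/- For all m, n ∈ ℕ, all z ∈ ℂ and ρ ∈ ℝ, the complex Hermite polynomial J_{m,n}(·,ρ) is an eigenfunction of the complex Ornstein–Uhlenbeck operator: z · (∂/∂z) J_{m,n}(z,ρ) − ρ · (∂/∂z)(∂/∂z̄) J_{m,n}(z,ρ) = m · J_{m,n}(z,ρ). -/
/-!
Write `J_{m,n} = ∑ₖ cₖ z^{m-k} z̄^{n-k}`. On a monomial `z^a z̄^b` the operator `z ∂_z` acts as
multiplication by `a`, while `∂_z ∂_z̄` lowers both exponents by one with factor `a b`. The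
coefficients satisfy `(k+1) c_{k+1} = -ρ (m-k)(n-k) cₖ`, so
`ρ ∂_z ∂_z̄ J_{m,n} = -∑ₖ k cₖ z^{m-k} z̄^{n-k}`, and hence
`z ∂_z J_{m,n} - ρ ∂_z ∂_z̄ J_{m,n} = ∑ₖ ((m-k) + k) cₖ z^{m-k} z̄^{n-k} = m J_{m,n}`.
-/

open MeasureTheory ProbabilityTheory Complex Finset

open ComplexConjugate

noncomputable def complexMonomial (a b : ℕ) (z : ℂ) : ℂ :=
  z ^ a * conj z ^ b

section Wirtinger

variable {f : ℂ → ℂ} {z A B : ℂ}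

theorem HasFDerivAt.wirtingerDeriv_eq
    (hf : HasFDerivAt f (A • ContinuousLinearMap.id ℝ ℂ + B • (conjCLE : ℂ →L[ℝ] ℂ)) z) :
    wirtingerDeriv f z = A := by
  rw [wirtingerDeriv, hf.fderiv]
  simp only [add_apply, smul_apply, ContinuousLinearMap.id_apply,
    ContinuousLinearEquiv.coe_coe, conjCLE_apply, map_one, conj_I, smul_eq_mul]
  linear_combination (B - A) / 2 * I_mul_I

theorem HasFDerivAt.wirtingerDerivBar_eq
    (hf : HasFDerivAt f (A • ContinuousLinearMap.id ℝ ℂ + B • (conjCLE : ℂ →L[ℝ] ℂ)) z) :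
    wirtingerDerivBar f z = B := by
  rw [wirtingerDerivBar, hf.fderiv]
  simp only [add_apply, smul_apply, ContinuousLinearMap.id_apply,
    ContinuousLinearEquiv.coe_coe, conjCLE_apply, map_one, conj_I, smul_eq_mul]
  linear_combination (A - B) / 2 * I_mul_I

end Wirtinger

theorem hasFDerivAt_complexMonomial (a b : ℕ) (z : ℂ) :
    HasFDerivAt (complexMonomial a b)
      ((a * complexMonomial (a - 1) b z) • ContinuousLinearMap.id ℝ ℂ
        + (b * complexMonomial a (b - 1) z) • (conjCLE : ℂ →L[ℝ] ℂ)) z := by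
  have hpow := (hasDerivAt_pow a z).hasFDerivAt.restrictScalars ℝ
  have hconjpow := ((hasDerivAt_pow b (conj z)).hasFDerivAt.restrictScalars ℝ).comp z
    (conjCLE : ℂ →L[ℝ] ℂ).hasFDerivAt
  refine (hpow.mul hconjpow).congr_fderiv ?_
  ext v
  simp only [Function.comp_apply, ContinuousLinearMap.comp_apply, add_apply, smul_apply,
    ContinuousLinearEquiv.coe_coe, ContinuousLinearMap.coe_restrictScalars',
    ContinuousLinearMap.toSpanSingleton_apply, ContinuousLinearMap.id_apply, conjCLE_apply,
    smul_eq_mul, complexMonomial]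
  ring

theorem mul_natCast_mul_pow_sub_one {R : Type*} [CommSemiring R] (x : R) (a : ℕ) :
    x * (a * x ^ (a - 1)) = a * x ^ a := by
  cases a with
  | zero => simp
  | succ a => rw [Nat.add_sub_cancel, pow_succ]; push_cast; ring

section SumOfMonomials

variable {ι : Type*} (s : Finset ι) (c : ι → ℂ) (a b : ι → ℕ) (z : ℂ)

theorem hasFDerivAt_sum_complexMonomial :
    HasFDerivAt (fun w => ∑ i ∈ s, c i * complexMonomial (a i) (b i) w)
      ((∑ i ∈ s, c i * a i * complexMonomial (a i - 1) (b i) z) • ContinuousLinearMap.id ℝ ℂ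
        + (∑ i ∈ s, c i * b i * complexMonomial (a i) (b i - 1) z) • (conjCLE : ℂ →L[ℝ] ℂ)) z := by
  refine (HasFDerivAt.fun_sum fun i _ =>
    (hasFDerivAt_complexMonomial (a i) (b i) z).const_mul (c i)).congr_fderiv ?_
  ext v
  simp [mul_assoc, sum_add_distrib, sum_mul]

theorem wirtingerDeriv_sum_complexMonomial :
    wirtingerDeriv (fun w => ∑ i ∈ s, c i * complexMonomial (a i) (b i) w) z =
      ∑ i ∈ s, c i * a i * complexMonomial (a i - 1) (b i) z :=
  (hasFDerivAt_sum_complexMonomial s c a b z).wirtingerDeriv_eq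

theorem wirtingerDerivBar_sum_complexMonomial :
    wirtingerDerivBar (fun w => ∑ i ∈ s, c i * complexMonomial (a i) (b i) w) z =
      ∑ i ∈ s, c i * b i * complexMonomial (a i) (b i - 1) z :=
  (hasFDerivAt_sum_complexMonomial s c a b z).wirtingerDerivBar_eq

theorem mul_wirtingerDeriv_sum_complexMonomial :
    z * wirtingerDeriv (fun w => ∑ i ∈ s, c i * complexMonomial (a i) (b i) w) z =
      ∑ i ∈ s, c i * a i * complexMonomial (a i) (b i) z := by
  rw [wirtingerDeriv_sum_complexMonomial, mul_sum]
  refine sum_congr rfl fun i _ => ?_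
  simp only [complexMonomial]
  linear_combination c i * conj z ^ b i * mul_natCast_mul_pow_sub_one z (a i)

end SumOfMonomials

noncomputable def complexHermiteCoeff (m n : ℕ) (ρ : ℝ) (k : ℕ) : ℂ :=
  (-1) ^ k * k.factorial * m.choose k * n.choose k * ρ ^ k

theorem complexHermite_eq_sum (m n : ℕ) (ρ : ℝ) (z : ℂ) :
    complexHermite m n z ρ = ∑ k ∈ range (min m n + 1),
      complexHermiteCoeff m n ρ k * complexMonomial (m - k) (n - k) z := by
  simp only [complexHermite, complexHermiteCoeff, complexMonomial, mul_assoc]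

theorem succ_mul_complexHermiteCoeff_succ (m n : ℕ) (ρ : ℝ) (k : ℕ) :
    (k + 1 : ℂ) * complexHermiteCoeff m n ρ (k + 1) =
      -ρ * (m - k : ℕ) * (n - k : ℕ) * complexHermiteCoeff m n ρ k := by
  have hm : ((m.choose (k + 1) * (k + 1) : ℕ) : ℂ) = (m.choose k * (m - k) : ℕ) := by
    rw [Nat.choose_succ_right_eq]
  have hn : ((n.choose (k + 1) * (k + 1) : ℕ) : ℂ) = (n.choose k * (n - k) : ℕ) := by
    rw [Nat.choose_succ_right_eq]
  simp only [complexHermiteCoeff, Nat.factorial_succ]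
  push_cast at hm hn ⊢
  linear_combination (-1) ^ (k + 1) * (k.factorial : ℂ) * (ρ : ℂ) ^ (k + 1) *
    ((n.choose (k + 1) * (k + 1) : ℂ) * hm + (m.choose k * ((m - k : ℕ) : ℂ)) * hn)

theorem mul_wirtingerDeriv_complexHermite (m n : ℕ) (ρ : ℝ) (z : ℂ) :
    z * wirtingerDeriv (fun w => complexHermite m n w ρ) z =
      ∑ k ∈ range (min m n + 1),
        complexHermiteCoeff m n ρ k * (m - k : ℕ) * complexMonomial (m - k) (n - k) z := by
  simp_rw [complexHermite_eq_sum, mul_wirtingerDeriv_sum_complexMonomial]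

theorem ofReal_mul_wirtingerDeriv_wirtingerDerivBar_complexHermite (m n : ℕ) (ρ : ℝ) (z : ℂ) :
    ρ * wirtingerDeriv (fun w => wirtingerDerivBar (fun v => complexHermite m n v ρ) w) z =
      -∑ k ∈ range (min m n + 1),
        k * complexHermiteCoeff m n ρ k * complexMonomial (m - k) (n - k) z := by
  simp_rw [complexHermite_eq_sum, wirtingerDerivBar_sum_complexMonomial,
    wirtingerDeriv_sum_complexMonomial]
  rw [sum_range_succ, sum_range_succ', mul_add, mul_sum]
  simp only [Nat.cast_zero, zero_mul, add_zero, ← sum_neg_distrib]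
  have hshift : ∀ k ∈ range (min m n),
      ρ * (complexHermiteCoeff m n ρ k * (n - k : ℕ) * (m - k : ℕ) *
        complexMonomial (m - k - 1) (n - k - 1) z) =
      -((k + 1 : ℕ) * complexHermiteCoeff m n ρ (k + 1) *
        complexMonomial (m - (k + 1)) (n - (k + 1)) z) := fun k _ => by
    rw [Nat.sub_add_eq, Nat.sub_add_eq]
    push_cast
    linear_combination complexMonomial (m - k - 1) (n - k - 1) z *
      succ_mul_complexHermiteCoeff_succ m n ρ k
  have htop : ((m - min m n : ℕ) : ℂ) * (n - min m n : ℕ) = 0 := by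
    rcases min_choice m n with h | h <;> simp [h]
  linear_combination sum_congr rfl hshift + ρ * complexHermiteCoeff m n ρ (min m n) *
    complexMonomial (m - min m n - 1) (n - min m n - 1) z * htop

/-- Eigenfunction property for the complex Ornstein–Uhlenbeck operator:
`z·∂_z J_{m,n} − ρ·∂_z ∂_z̄ J_{m,n} = m·J_{m,n}`. -/
theorem complexHermite_OU_eigenfunction (m n : ℕ) (z : ℂ) (ρ : ℝ) :
    z * wirtingerDeriv (fun w => complexHermite m n w ρ) z
      - (ρ : ℂ) * wirtingerDeriv (fun w => wirtingerDerivBar (fun v => complexHermite m n v ρ) w) z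
      = (m : ℂ) * complexHermite m n z ρ := by
  rw [mul_wirtingerDeriv_complexHermite,
    ofReal_mul_wirtingerDeriv_wirtingerDerivBar_complexHermite, sub_neg_eq_add,
    ← sum_add_distrib, complexHermite_eq_sum, mul_sum]
  refine sum_congr rfl fun k hk => ?_
  have hkm : k ≤ m := by
    rw [mem_range] at hk
    omega
  rw [Nat.cast_sub hkm]
  ring
end

section
/- Conjugate integration by parts for complex Gaussian variables: let Z be a complex Gaussian random variable with parameter ρ > 0, and let f : ℂ → ℂ be continuously differentiable (as a map ℝ² → ℝ²) with f and its derivative bounded. Then E[Z · f(Z)] = ρ · E[(∂f/∂z̄)(Z)]. -/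
open MeasureTheory ProbabilityTheory Complex Finset

/-- Law of a complex Gaussian variable with parameter `ρ`: the law of `Z = X + iY` where
`X, Y` are independent real centered Gaussian variables of mean `0` and variance `ρ/2`. -/
noncomputable def complexGaussian (ρ : ℝ) : Measure ℂ :=
  ((gaussianReal 0 (ρ/2).toNNReal).prod (gaussianReal 0 (ρ/2).toNNReal)).map
    (fun p => (p.1 : ℂ) + (p.2 : ℂ) * Complex.I)

/-!
Write `Z = X + iY` with `X, Y` independent centered Gaussians of variance `v = ρ/2`. Then
`Z f(Z) = X f(Z) + i Y f(Z)` and `ρ ∂f/∂z̄ = v (∂f/∂x + i ∂f/∂y)`, so by Fubini the identity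
reduces to the one-dimensional Gaussian integration by parts `E[X g(X)] = v E[g'(X)]` (Stein's
lemma), applied to the slices of `f` in each coordinate. Stein's lemma is the fundamental theorem
of calculus for `φ g`, with `φ` the Gaussian density: `∫ (φ g)' = 0` and `φ' = -(x / v) φ`.
-/

open scoped NNReal

namespace ProbabilityTheory

lemma hasDerivAt_gaussianPDFReal (m : ℝ) (v : ℝ≥0) (x : ℝ) :
    HasDerivAt (gaussianPDFReal m v) (-((x - m) / v) * gaussianPDFReal m v x) x := by
  have h : HasDerivAt (fun x => -(x - m) ^ 2 / (2 * v)) (-((x - m) / v)) x :=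
    ((((hasDerivAt_id' x).sub_const m).pow 2).neg.div_const (2 * (v : ℝ))).congr_deriv
      (by ring)
  rw [gaussianPDFReal_def]
  exact (h.exp.const_mul (√(2 * Real.pi * v))⁻¹).congr_deriv (by ring)

lemma integrable_gaussianReal_iff {E : Type*} [NormedAddCommGroup E] [NormedSpace ℝ E]
    {m : ℝ} {v : ℝ≥0} (hv : v ≠ 0) {g : ℝ → E} :
    Integrable g (gaussianReal m v) ↔ Integrable (fun x => gaussianPDFReal m v x • g x) := by
  rw [gaussianReal_of_var_ne_zero m hv, integrable_withDensity_iff_integrable_smul'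
    (measurable_gaussianPDF m v) (ae_of_all _ fun _ => gaussianPDF_lt_top)]
  simp only [toReal_gaussianPDF]

theorem integral_sub_smul_gaussianReal_eq_smul_integral_deriv {E : Type*}
    [NormedAddCommGroup E] [NormedSpace ℝ E] [CompleteSpace E] {m : ℝ} {v : ℝ≥0} {g g' : ℝ → E}
    (hg : ∀ x, HasDerivAt g (g' x) x) (hg_int : Integrable g (gaussianReal m v))
    (hxg_int : Integrable (fun x => (x - m) • g x) (gaussianReal m v))
    (hg'_int : Integrable g' (gaussianReal m v)) :
    ∫ x, (x - m) • g x ∂gaussianReal m v = (v : ℝ) • ∫ x, g' x ∂gaussianReal m v := by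
  rcases eq_or_ne v 0 with rfl | hv
  · simp [gaussianReal_zero_var, integral_dirac]
  rw [integrable_gaussianReal_iff hv] at hg_int hxg_int hg'_int
  rw [integral_gaussianReal_eq_integral_smul hv, integral_gaussianReal_eq_integral_smul hv]
  set φ := gaussianPDFReal m v
  have hderiv : ∀ x, HasDerivAt (fun x => φ x • g x)
      (φ x • g' x + -(v : ℝ)⁻¹ • φ x • (x - m) • g x) x := by
    intro x
    refine ((hasDerivAt_gaussianPDFReal m v x).smul (hg x)).congr_deriv ?_
    simp only [smul_smul]
    congr 2
    ring
  have hrest : Integrable fun x => -(v : ℝ)⁻¹ • φ x • (x - m) • g x := hxg_int.smul _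
  have hboundary := integral_eq_zero_of_hasDerivAt_of_integrable hderiv
    (hg'_int.add hrest) hg_int
  rw [integral_add hg'_int hrest, integral_smul, add_eq_zero_iff_eq_neg, neg_smul,
    neg_neg] at hboundary
  rw [hboundary, smul_smul, mul_inv_cancel₀ (NNReal.coe_ne_zero.mpr hv), one_smul]

theorem integral_snd_smul_prod_gaussianReal {E : Type*} [NormedAddCommGroup E]
    [NormedSpace ℝ E] [CompleteSpace E] {ν : Measure ℝ} [IsFiniteMeasure ν] {v : ℝ≥0}
    {F F' : ℝ × ℝ → E} {C C' : ℝ} (hF : ∀ x y, HasDerivAt (fun t => F (x, t)) (F' (x, y)) y)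
    (hF_meas : StronglyMeasurable F) (hF'_meas : StronglyMeasurable F')
    (hF_bdd : ∀ p, ‖F p‖ ≤ C) (hF'_bdd : ∀ p, ‖F' p‖ ≤ C') :
    ∫ p, p.2 • F p ∂ν.prod (gaussianReal 0 v) =
      (v : ℝ) • ∫ p, F' p ∂ν.prod (gaussianReal 0 v) := by
  have hid : Integrable (fun y : ℝ => y) (gaussianReal 0 v) :=
    (memLp_id_gaussianReal 1).integrable le_rfl
  have hF_int : Integrable (fun p => p.2 • F p) (ν.prod (gaussianReal 0 v)) :=
    (hid.comp_snd ν).smul_bdd C hF_meas.aestronglyMeasurable (ae_of_all _ hF_bdd)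
  have hF'_int : Integrable F' (ν.prod (gaussianReal 0 v)) :=
    .of_bound hF'_meas.aestronglyMeasurable C' (ae_of_all _ hF'_bdd)
  rw [integral_prod _ hF_int, integral_prod _ hF'_int, ← integral_smul]
  refine integral_congr_ae (ae_of_all _ fun x => ?_)
  have hslice : ∀ {G : ℝ × ℝ → E}, StronglyMeasurable G →
      StronglyMeasurable fun t => G (x, t) :=
    fun hG => hG.comp_measurable measurable_prodMk_left
  have hxF_int : Integrable (fun t => (t - 0) • F (x, t)) (gaussianReal 0 v) := by
    simp only [sub_zero]
    exact hid.smul_bdd C (hslice hF_meas).aestronglyMeasurable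
      (ae_of_all _ fun _ => hF_bdd _)
  simpa only [sub_zero] using integral_sub_smul_gaussianReal_eq_smul_integral_deriv (hF x)
    (.of_bound (hslice hF_meas).aestronglyMeasurable C (ae_of_all _ fun _ => hF_bdd _)) hxF_int
    (.of_bound (hslice hF'_meas).aestronglyMeasurable C' (ae_of_all _ fun _ => hF'_bdd _))

end ProbabilityTheory

section ComplexGaussian

variable {ρ : ℝ}

instance (ρ : ℝ) : IsProbabilityMeasure (complexGaussian ρ) :=
  Measure.isProbabilityMeasure_map (by fun_prop)

lemma integral_complexGaussian {E : Type*} [NormedAddCommGroup E] [NormedSpace ℝ E]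
    (g : ℂ → E) :
    ∫ z, g z ∂complexGaussian ρ = ∫ p, g (p.1 + p.2 * I)
      ∂(gaussianReal 0 (ρ / 2).toNNReal).prod (gaussianReal 0 (ρ / 2).toNNReal) := by
  have hT : (fun p : ℝ × ℝ => (p.1 : ℂ) + p.2 * I) = measurableEquivRealProd.symm := by
    ext p
    exact (mk_eq_add_mul_I _ _).symm
  rw [complexGaussian, hT, integral_map_equiv, ← hT]

lemma integrable_id_complexGaussian : Integrable (fun z => z) (complexGaussian ρ) := by
  have hid : Integrable (fun x : ℝ => x) (gaussianReal 0 (ρ / 2).toNNReal) :=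
    (memLp_id_gaussianReal 1).integrable le_rfl
  rw [complexGaussian, integrable_map_measure (by fun_prop) (by fun_prop)]
  exact ((hid.comp_fst _).ofReal).add ((hid.comp_snd _).ofReal.mul_const I)

variable {f : ℂ → ℂ} {C C' : ℝ}

lemma measurable_wirtingerDerivBar (f : ℂ → ℂ) : Measurable (wirtingerDerivBar f) :=
  ((measurable_fderiv_apply_const ℝ f 1).add
    (measurable_const.mul (measurable_fderiv_apply_const ℝ f I))).div_const 2

lemma norm_fderiv_apply_le_of_norm_eq_one (hfd : ∀ z, ‖fderiv ℝ f z‖ ≤ C') {w : ℂ}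
    (hw : ‖w‖ = 1) (z : ℂ) : ‖fderiv ℝ f z w‖ ≤ C' := by
  simpa [hw] using (fderiv ℝ f z).le_of_opNorm_le (hfd z) w

lemma hasDerivAt_comp_ofReal_add_mul_I (hf : Differentiable ℝ f) (x y : ℝ) :
    HasDerivAt (fun t : ℝ => f (t + y * I)) (fderiv ℝ f (x + y * I) 1) x :=
  (hf _).hasFDerivAt.comp_hasDerivAt x ((hasDerivAt_id' x).ofReal_comp.add_const _)

lemma hasDerivAt_comp_add_ofReal_mul_I (hf : Differentiable ℝ f) (x y : ℝ) :
    HasDerivAt (fun t : ℝ => f (x + t * I)) (fderiv ℝ f (x + y * I) I) y :=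
  (hf _).hasFDerivAt.comp_hasDerivAt y
    ((((hasDerivAt_id' y).ofReal_comp.mul_const I).const_add _).congr_deriv (one_mul I))

lemma integral_im_smul_complexGaussian (hρ : 0 ≤ ρ) (hf : Differentiable ℝ f)
    (hfb : ∀ z, ‖f z‖ ≤ C) (hfd : ∀ z, ‖fderiv ℝ f z‖ ≤ C') :
    ∫ z, z.im • f z ∂complexGaussian ρ = (ρ / 2) • ∫ z, fderiv ℝ f z I ∂complexGaussian ρ := by
  rw [integral_complexGaussian, integral_complexGaussian]
  set v := (ρ / 2).toNNReal
  rw [show ρ / 2 = v from (Real.coe_toNNReal _ (by positivity)).symm]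
  simp only [add_im, ofReal_im, mul_im, ofReal_re, I_re, I_im, mul_zero, mul_one, zero_add,
    add_zero]
  exact integral_snd_smul_prod_gaussianReal (F := fun p => f (p.1 + p.2 * I))
    (F' := fun p => fderiv ℝ f (p.1 + p.2 * I) I) (hasDerivAt_comp_add_ofReal_mul_I hf)
    (hf.continuous.comp (by fun_prop)).stronglyMeasurable
    ((measurable_fderiv_apply_const ℝ f I).comp (by fun_prop)).stronglyMeasurable
    (fun _ => hfb _) (fun _ => norm_fderiv_apply_le_of_norm_eq_one hfd norm_I _)

lemma integral_re_smul_complexGaussian (hρ : 0 ≤ ρ) (hf : Differentiable ℝ f)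
    (hfb : ∀ z, ‖f z‖ ≤ C) (hfd : ∀ z, ‖fderiv ℝ f z‖ ≤ C') :
    ∫ z, z.re • f z ∂complexGaussian ρ = (ρ / 2) • ∫ z, fderiv ℝ f z 1 ∂complexGaussian ρ := by
  rw [integral_complexGaussian, integral_complexGaussian]
  set v := (ρ / 2).toNNReal
  rw [show ρ / 2 = v from (Real.coe_toNNReal _ (by positivity)).symm, ← integral_prod_swap,
    ← integral_prod_swap (fun p : ℝ × ℝ => fderiv ℝ f (p.1 + p.2 * I) 1)]
  simp only [Prod.fst_swap, Prod.snd_swap, add_re, ofReal_re, mul_re, I_re, I_im, ofReal_im,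
    mul_zero, mul_one, sub_zero, add_zero]
  exact integral_snd_smul_prod_gaussianReal (F := fun p => f (p.2 + p.1 * I))
    (F' := fun p => fderiv ℝ f (p.2 + p.1 * I) 1)
    (fun x y => hasDerivAt_comp_ofReal_add_mul_I hf y x)
    (hf.continuous.comp (by fun_prop)).stronglyMeasurable
    ((measurable_fderiv_apply_const ℝ f 1).comp (by fun_prop)).stronglyMeasurable
    (fun _ => hfb _) (fun _ => norm_fderiv_apply_le_of_norm_eq_one hfd norm_one _)

theorem integral_mul_complexGaussian (hρ : 0 ≤ ρ) (hf : Differentiable ℝ f)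
    (hfb : ∀ z, ‖f z‖ ≤ C) (hfd : ∀ z, ‖fderiv ℝ f z‖ ≤ C') :
    ∫ z, z * f z ∂complexGaussian ρ = ρ * ∫ z, wirtingerDerivBar f z ∂complexGaussian ρ := by
  have hf_meas := hf.continuous.aestronglyMeasurable (μ := complexGaussian ρ)
  have hre_int : Integrable (fun z => z.re • f z) (complexGaussian ρ) :=
    integrable_id_complexGaussian.re.smul_bdd C hf_meas (ae_of_all _ hfb)
  have him_int : Integrable (fun z => z.im • f z) (complexGaussian ρ) :=
    integrable_id_complexGaussian.im.smul_bdd C hf_meas (ae_of_all _ hfb)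
  have hderiv_int : ∀ w : ℂ, ‖w‖ = 1 →
      Integrable (fun z => fderiv ℝ f z w) (complexGaussian ρ) := fun w hw =>
    .of_bound (measurable_fderiv_apply_const ℝ f w).aestronglyMeasurable C'
      (ae_of_all _ (norm_fderiv_apply_le_of_norm_eq_one hfd hw))
  have hsplit : ∀ z : ℂ, z * f z = z.re • f z + I * z.im • f z := fun z => by
    rw [real_smul, real_smul, ← mul_assoc, ← add_mul, mul_comm I, re_add_im]
  simp only [hsplit, wirtingerDerivBar]
  rw [integral_add hre_int (him_int.const_mul I), integral_const_mul, integral_div,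
    integral_add (hderiv_int 1 norm_one) ((hderiv_int I norm_I).const_mul I), integral_const_mul,
    integral_re_smul_complexGaussian hρ hf hfb hfd,
    integral_im_smul_complexGaussian hρ hf hfb hfd]
  simp only [real_smul]
  push_cast
  ring

end ComplexGaussian

theorem complex_gaussian_conj_integration_by_parts_general
    {Ω : Type*} [MeasurableSpace Ω] (P : Measure Ω)
    (Z : Ω → ℂ) (hZmeas : Measurable Z) (ρ : ℝ) (hρ : 0 < ρ)
    (hZ : Measure.map Z P = complexGaussian ρ)
    (f : ℂ → ℂ) (hf : ContDiff ℝ 1 f) (C : ℝ)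
    (hfb : ∀ z, ‖f z‖ ≤ C) (hfd : ∀ z, ‖fderiv ℝ f z‖ ≤ C) :
    ∫ ω, Z ω * f (Z ω) ∂P
      = (ρ : ℂ) * ∫ ω, wirtingerDerivBar f (Z ω) ∂P := by
  have hf_cont : Continuous fun z => z * f z := continuous_id.mul hf.continuous
  rw [← integral_map hZmeas.aemeasurable hf_cont.aestronglyMeasurable,
    ← integral_map hZmeas.aemeasurable (measurable_wirtingerDerivBar f).aestronglyMeasurable, hZ]
  exact integral_mul_complexGaussian hρ.le (hf.differentiable one_ne_zero) hfb hfd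

/-- Conjugate integration by parts for a complex Gaussian variable `Z` with parameter `ρ > 0`:
`E[Z·f(Z)] = ρ·E[(∂f/∂z̄)(Z)]` for `f : ℂ → ℂ` continuously differentiable with
`f` and its derivative bounded. -/
theorem complex_gaussian_conj_integration_by_parts
    {Ω : Type*} [MeasurableSpace Ω] (P : Measure Ω) [IsProbabilityMeasure P]
    (Z : Ω → ℂ) (hZmeas : Measurable Z) (ρ : ℝ) (hρ : 0 < ρ)
    (hZ : Measure.map Z P = complexGaussian ρ)
    (f : ℂ → ℂ) (hf : ContDiff ℝ 1 f) (C : ℝ)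
    (hfb : ∀ z, ‖f z‖ ≤ C) (hfd : ∀ z, ‖fderiv ℝ f z‖ ≤ C) :
    ∫ ω, Z ω * f (Z ω) ∂P
      = (ρ : ℂ) * ∫ ω, wirtingerDerivBar f (Z ω) ∂P :=
  complex_gaussian_conj_integration_by_parts_general P Z hZmeas ρ hρ hZ f hf C hfb hfd
end
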